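/- arXiv:math/0505009 — 3 statements merged into one kernel-verified Lean document; each statement's English description precedes it below -/
import Mathlib

section
/- The map Φ₊ : Sad₊ → D̄^a × S^{b−1} × ℝ defined by Φ₊(x,y) = (‖y‖·x, y/‖y‖, f₊(x,y)) is a homeomorphism from Sad₊ onto D̄^a × S^{b−1} × ℝ. -/
/-!
Since `‖(‖y‖ • x)‖ = ‖x‖ * ‖y‖`, the weight `c(x, y)` only depends on the first component `u`
of `Φ₊(x, y)`, and it is positive there (it is a convex combination of `‖u‖ ^ 2` and `1`,
equal to `1` at `u = 0`). For `c > 0` the map `r ↦ c / r ^ 2 - r ^ 2` is a strictly decreasing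
bijection `(0, ∞) → ℝ`, with an explicit continuous inverse obtained by solving a quadratic in
`r ^ 2`. Hence `‖y‖` is recovered continuously from `(u, f₊)`, and then
`(x, y) = (‖y‖⁻¹ • u, ‖y‖ • v)`.
-/

open Set

/-- `saddleRadius c t ^ 2` is the positive root of `R ^ 2 + t * R - c`. -/
noncomputable def saddleRadius (c t : ℝ) : ℝ :=
  √((√(t ^ 2 + 4 * c) - t) / 2)

section SaddleRadius

variable {c t : ℝ}

lemma lt_sqrt_sq_add_four_mul (hc : 0 < c) : t < √(t ^ 2 + 4 * c) :=
  calc t ≤ |t| := le_abs_self t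
    _ = √(t ^ 2) := (Real.sqrt_sq_eq_abs t).symm
    _ < √(t ^ 2 + 4 * c) := Real.sqrt_lt_sqrt (sq_nonneg t) (by linarith)

lemma saddleRadius_sq (hc : 0 < c) :
    saddleRadius c t ^ 2 = (√(t ^ 2 + 4 * c) - t) / 2 :=
  Real.sq_sqrt (by linarith [lt_sqrt_sq_add_four_mul (t := t) hc])

lemma saddleRadius_pos (hc : 0 < c) : 0 < saddleRadius c t :=
  Real.sqrt_pos.2 (by linarith [lt_sqrt_sq_add_four_mul (t := t) hc])

lemma div_sq_sub_sq_saddleRadius (hc : 0 < c) :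
    c / saddleRadius c t ^ 2 - saddleRadius c t ^ 2 = t := by
  have hR := saddleRadius_sq (t := t) hc
  have hR0 : saddleRadius c t ^ 2 ≠ 0 := (pow_pos (saddleRadius_pos hc) 2).ne'
  have hD : √(t ^ 2 + 4 * c) ^ 2 = t ^ 2 + 4 * c := Real.sq_sqrt (by positivity)
  rw [div_sub' hR0, div_eq_iff hR0, hR]
  linear_combination (-1 / 4 : ℝ) * hD

lemma strictAntiOn_div_sq_sub_sq (hc : 0 ≤ c) :
    StrictAntiOn (fun r : ℝ => c / r ^ 2 - r ^ 2) (Ioi 0) := by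
  intro r (hr : 0 < r) s _ hrs
  have hsq : r ^ 2 < s ^ 2 := pow_lt_pow_left₀ hrs hr.le two_ne_zero
  have hdiv : c / s ^ 2 ≤ c / r ^ 2 := div_le_div_of_nonneg_left hc (by positivity) hsq.le
  simp only
  linarith

lemma eq_saddleRadius {r : ℝ} (hc : 0 < c) (hr : 0 < r) (h : c / r ^ 2 - r ^ 2 = t) :
    r = saddleRadius c t :=
  (strictAntiOn_div_sq_sub_sq hc.le).injOn hr (saddleRadius_pos hc)
    (h.trans (div_sq_sub_sq_saddleRadius hc).symm)

end SaddleRadius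

@[fun_prop]
lemma Continuous.saddleRadius {X : Type*} [TopologicalSpace X] {c t : X → ℝ}
    (hc : Continuous c) (ht : Continuous t) :
    Continuous fun x => saddleRadius (c x) (t x) := by
  unfold _root_.saddleRadius
  fun_prop

lemma sq_mul_add_one_sub_pos {τ : ℝ → ℝ} (hτ01 : ∀ t ∈ Icc (0 : ℝ) 1, τ t ∈ Icc (0 : ℝ) 1)
    (hτ0 : τ 0 = 0) {s : ℝ} (hs : s ∈ Icc (0 : ℝ) 1) : 0 < s ^ 2 * τ s + (1 - τ s) := by
  rcases hs.1.eq_or_lt with rfl | hs0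
  · simp [hτ0]
  · have hτs := hτ01 s hs
    have : 0 ≤ (1 - τ s) * (1 - s ^ 2) :=
      mul_nonneg (by linarith [hτs.2]) (by nlinarith [hs.2])
    nlinarith [pow_pos hs0 2]

namespace Saddle

variable {E F : Type*} [NormedAddCommGroup E] [NormedAddCommGroup F]

variable (E F) in
abbrev Region := {p : E × F // p.2 ≠ 0 ∧ ‖p.1‖ * ‖p.2‖ ≤ 1}

variable (E F) in
abbrev Chart := {x : E // ‖x‖ ≤ 1} × {y : F // ‖y‖ = 1} × ℝ

variable (c : ℝ → ℝ) (g : ℝ)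

noncomputable def radius (q : Chart E F) : ℝ := saddleRadius (c ‖(q.1 : E)‖) (q.2.2 - g)

variable {c}

lemma radius_pos (hc : ∀ s ∈ Icc (0 : ℝ) 1, 0 < c s) (q : Chart E F) : 0 < radius c g q :=
  saddleRadius_pos (hc _ ⟨norm_nonneg _, q.1.2⟩)

variable [NormedSpace ℝ E] [NormedSpace ℝ F]

variable (c) in
noncomputable def toChart (p : Region E F) : Chart E F :=
  (⟨‖p.1.2‖ • p.1.1, by rw [norm_smul, norm_norm, mul_comm]; exact p.2.2⟩,
   ⟨‖p.1.2‖⁻¹ • p.1.2, norm_smul_inv_norm p.2.1⟩,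
   g + c (‖p.1.1‖ * ‖p.1.2‖) / ‖p.1.2‖ ^ 2 - ‖p.1.2‖ ^ 2)

noncomputable def ofChart (hc : ∀ s ∈ Icc (0 : ℝ) 1, 0 < c s) (q : Chart E F) : Region E F :=
  ⟨((radius c g q)⁻¹ • q.1, radius c g q • q.2.1), by
    have hr := radius_pos g hc q
    refine ⟨smul_ne_zero hr.ne' (ne_zero_of_norm_ne_zero (by rw [q.2.1.2]; exact one_ne_zero)),
      ?_⟩
    rw [norm_smul, norm_smul, Real.norm_of_nonneg (inv_nonneg.2 hr.le),
      Real.norm_of_nonneg hr.le, q.2.1.2, mul_one, mul_right_comm, inv_mul_cancel₀ hr.ne', one_mul]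
    exact q.1.2⟩

variable (hc : ∀ s ∈ Icc (0 : ℝ) 1, 0 < c s)

lemma ofChart_toChart (p : Region E F) : ofChart g hc (toChart c g p) = p := by
  obtain ⟨⟨x, y⟩, hy, hxy⟩ := p
  have hy0 : 0 < ‖y‖ := norm_pos_iff.2 hy
  have hr : radius c g (toChart c g ⟨(x, y), hy, hxy⟩) = ‖y‖ := by
    refine (eq_saddleRadius (hc _ ⟨by positivity, ?_⟩) hy0 ?_).symm
    · simp only [toChart, norm_smul, norm_norm]; linarith
    · simp only [toChart, norm_smul, norm_norm, mul_comm ‖y‖]; ring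
  ext1
  simp only [ofChart]
  rw [hr]
  simp only [toChart, smul_smul, inv_mul_cancel₀ hy0.ne', mul_inv_cancel₀ hy0.ne', one_smul]

lemma toChart_ofChart (q : Chart E F) : toChart c g (ofChart g hc q) = q := by
  obtain ⟨⟨u, hu⟩, ⟨v, hv⟩, s⟩ := q
  have hr := radius_pos g hc (⟨u, hu⟩, ⟨v, hv⟩, s)
  set r := radius c g (⟨u, hu⟩, ⟨v, hv⟩, s) with hr_def
  have hnorm : ‖r • v‖ = r := by rw [norm_smul, Real.norm_of_nonneg hr.le, hv, mul_one]
  have hprod : ‖r⁻¹ • u‖ * r = ‖u‖ := by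
    rw [norm_smul, Real.norm_of_nonneg (inv_nonneg.2 hr.le), mul_right_comm,
      inv_mul_cancel₀ hr.ne', one_mul]
  refine Prod.ext (Subtype.ext ?_) (Prod.ext (Subtype.ext ?_) ?_)
  · simp only [toChart, ofChart, ← hr_def, hnorm, smul_smul, mul_inv_cancel₀ hr.ne', one_smul]
  · simp only [toChart, ofChart, ← hr_def, hnorm, smul_smul, inv_mul_cancel₀ hr.ne', one_smul]
  · simp only [toChart, ofChart, ← hr_def, hnorm, hprod]
    have := div_sq_sub_sq_saddleRadius (t := s - g) (hc _ ⟨norm_nonneg u, hu⟩)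
    rw [hr_def, radius]
    linarith

variable {g}

lemma continuous_toChart (hcont : ContinuousOn c (Icc 0 1)) :
    Continuous (toChart (E := E) (F := F) c g) := by
  have hx : Continuous fun p : Region E F => p.1.1 := continuous_subtype_val.fst
  have hy : Continuous fun p : Region E F => p.1.2 := continuous_subtype_val.snd
  have hy0 (p : Region E F) : ‖p.1.2‖ ≠ 0 := norm_ne_zero_iff.2 p.2.1
  have hc : Continuous fun p : Region E F => c (‖p.1.1‖ * ‖p.1.2‖) :=
    hcont.comp_continuous (hx.norm.mul hy.norm) fun p => ⟨by positivity, p.2.2⟩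
  refine .prodMk ((hy.norm.smul hx).subtype_mk _)
    (.prodMk (((hy.norm.inv₀ hy0).smul hy).subtype_mk _) ?_)
  exact (continuous_const.add (hc.div (hy.norm.pow 2) fun p => pow_ne_zero 2 (hy0 p))).sub
    (hy.norm.pow 2)

lemma continuous_ofChart (hcont : ContinuousOn c (Icc 0 1)) :
    Continuous (ofChart (E := E) (F := F) g hc) := by
  have hu : Continuous fun q : Chart E F => (q.1 : E) := continuous_subtype_val.comp continuous_fst
  have hv : Continuous fun q : Chart E F => (q.2.1 : F) :=
    continuous_subtype_val.comp continuous_snd.fst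
  have hr : Continuous (radius (E := E) (F := F) c g) :=
    (hcont.comp_continuous hu.norm fun q => ⟨norm_nonneg _, q.1.2⟩).saddleRadius
      (continuous_snd.snd.sub continuous_const)
  exact (((hr.inv₀ fun q => (radius_pos g hc q).ne').smul hu).prodMk (hr.smul hv)).subtype_mk _

noncomputable def homeomorph (hcont : ContinuousOn c (Icc 0 1)) : Region E F ≃ₜ Chart E F where
  toFun := toChart c g
  invFun := ofChart g hc
  left_inv := ofChart_toChart g hc
  right_inv := toChart_ofChart g hc
  continuous_toFun := continuous_toChart hcont
  continuous_invFun := continuous_ofChart hc hcont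

end Saddle

theorem saddle_plus_homeomorph_general (a b : ℕ) (g : ℝ)
    (τ : ℝ → ℝ) (hτc : Continuous τ)
    (hτ01 : ∀ t ∈ Set.Icc (0 : ℝ) 1, τ t ∈ Set.Icc (0 : ℝ) 1) (hτ0 : τ 0 = 0) :
    ∃ h : {p : EuclideanSpace ℝ (Fin a) × EuclideanSpace ℝ (Fin b) //
          p.2 ≠ 0 ∧ ‖p.1‖ * ‖p.2‖ ≤ 1} ≃ₜ
        {x : EuclideanSpace ℝ (Fin a) // ‖x‖ ≤ 1} ×
          {y : EuclideanSpace ℝ (Fin b) // ‖y‖ = 1} × ℝ,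
      ∀ p : {p : EuclideanSpace ℝ (Fin a) × EuclideanSpace ℝ (Fin b) //
          p.2 ≠ 0 ∧ ‖p.1‖ * ‖p.2‖ ≤ 1},
        ((h p).1 : EuclideanSpace ℝ (Fin a)) = ‖p.1.2‖ • p.1.1 ∧
        ((h p).2.1 : EuclideanSpace ℝ (Fin b)) = ‖p.1.2‖⁻¹ • p.1.2 ∧
        (h p).2.2 = g +
          (‖p.1.1‖ ^ 2 * ‖p.1.2‖ ^ 2 * τ (‖p.1.1‖ * ‖p.1.2‖) +
            (1 - τ (‖p.1.1‖ * ‖p.1.2‖))) / ‖p.1.2‖ ^ 2 - ‖p.1.2‖ ^ 2 := by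
  refine ⟨Saddle.homeomorph (c := fun s => s ^ 2 * τ s + (1 - τ s)) (g := g)
    (fun s hs => sq_mul_add_one_sub_pos hτ01 hτ0 hs) (by fun_prop), fun p => ⟨rfl, rfl, ?_⟩⟩
  simp only [Saddle.homeomorph, Homeomorph.homeomorph_mk_coe, Equiv.coe_fn_mk, Saddle.toChart,
    mul_pow]

/-- The map `Φ₊(x,y) = (‖y‖·x, y/‖y‖, f₊(x,y))` is a homeomorphism from the saddle region
`Sad₊ = {(x,y) : y ≠ 0, ‖x‖‖y‖ ≤ 1}` onto `D̄^a × S^{b-1} × ℝ`, where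
`f₊(x,y) = g + c(x,y)/‖y‖² - ‖y‖²` and
`c(x,y) = ‖x‖²‖y‖²·τ(‖x‖‖y‖) + (1 - τ(‖x‖‖y‖))`. -/
theorem saddle_plus_homeomorph (a b : ℕ) (ha : 1 ≤ a) (hb : 1 ≤ b) (g : ℝ)
    (τ : ℝ → ℝ) (hτc : Continuous τ)
    (hτ01 : ∀ t ∈ Set.Icc (0 : ℝ) 1, τ t ∈ Set.Icc (0 : ℝ) 1) (hτ0 : τ 0 = 0) :
    ∃ h : {p : EuclideanSpace ℝ (Fin a) × EuclideanSpace ℝ (Fin b) //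
          p.2 ≠ 0 ∧ ‖p.1‖ * ‖p.2‖ ≤ 1} ≃ₜ
        {x : EuclideanSpace ℝ (Fin a) // ‖x‖ ≤ 1} ×
          {y : EuclideanSpace ℝ (Fin b) // ‖y‖ = 1} × ℝ,
      ∀ p : {p : EuclideanSpace ℝ (Fin a) × EuclideanSpace ℝ (Fin b) //
          p.2 ≠ 0 ∧ ‖p.1‖ * ‖p.2‖ ≤ 1},
        ((h p).1 : EuclideanSpace ℝ (Fin a)) = ‖p.1.2‖ • p.1.1 ∧
        ((h p).2.1 : EuclideanSpace ℝ (Fin b)) = ‖p.1.2‖⁻¹ • p.1.2 ∧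
        (h p).2.2 = g +
          (‖p.1.1‖ ^ 2 * ‖p.1.2‖ ^ 2 * τ (‖p.1.1‖ * ‖p.1.2‖) +
            (1 - τ (‖p.1.1‖ * ‖p.1.2‖))) / ‖p.1.2‖ ^ 2 - ‖p.1.2‖ ^ 2 :=
  saddle_plus_homeomorph_general a b g τ hτc hτ01 hτ0
end

section
/- The map Φ₋ : Sad₋ → S^{a−1} × D̄^b × ℝ defined by Φ₋(x,y) = (x/‖x‖, ‖x‖·y, f₋(x,y)) is a homeomorphism from Sad₋ onto S^{a−1} × D̄^b × ℝ. -/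
/-!
With `r = ‖x‖` the map factors as `(x, y) ↦ (x / r, r • y, r)`, a homeomorphism onto
`S × D̄ × (0, ∞)` with inverse `(u, w, r) ↦ (r • u, r⁻¹ • w)`, followed on each fibre by
`r ↦ g + r² - c / r²`, where `c` depends only on `‖w‖ = ‖x‖‖y‖ ∈ [0, 1]` and is positive there.
For `c > 0` this is a bijection of `(0, ∞)` onto `ℝ`: `r²` is the positive root of
`X² - (z - g) X - c`, which depends continuously on `(z, c)`.
-/

open Set

noncomputable section

def posRoot (t c : ℝ) : ℝ := (t + √(t ^ 2 + 4 * c)) / 2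

lemma posRoot_pos {t c : ℝ} (hc : 0 < c) : 0 < posRoot t c := by
  have h : |t| < √(t ^ 2 + 4 * c) := by
    rw [← Real.sqrt_sq_eq_abs]
    exact Real.sqrt_lt_sqrt (sq_nonneg _) (by linarith)
  unfold posRoot
  linarith [neg_abs_le t]

lemma posRoot_sub_div {t c : ℝ} (hc : 0 < c) : posRoot t c - c / posRoot t c = t := by
  have hR := posRoot_pos (t := t) hc
  have hs : √(t ^ 2 + 4 * c) ^ 2 = t ^ 2 + 4 * c := Real.sq_sqrt (by positivity)
  have hquad : posRoot t c ^ 2 = t * posRoot t c + c := by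
    unfold posRoot; linear_combination hs / 4
  field_simp
  linarith

lemma posRoot_sub_div_self {c R : ℝ} (hc : 0 ≤ c) (hR : 0 < R) : posRoot (R - c / R) c = R := by
  have hD : (R - c / R) ^ 2 + 4 * c = (R + c / R) ^ 2 := by
    field_simp; ring
  rw [posRoot, hD, Real.sqrt_sq (by positivity)]
  ring

lemma continuous_posRoot : Continuous fun p : ℝ × ℝ => posRoot p.1 p.2 := by
  unfold posRoot; fun_prop

def Homeomorph.prodIoiSqSubDiv {X : Type*} [TopologicalSpace X] (c : X → ℝ) (hc : Continuous c)
    (hpos : ∀ x, 0 < c x) (g : ℝ) : X × Ioi (0 : ℝ) ≃ₜ X × ℝ where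
  toFun p := (p.1, g + (p.2 : ℝ) ^ 2 - c p.1 / (p.2 : ℝ) ^ 2)
  invFun q := (q.1, ⟨√(posRoot (q.2 - g) (c q.1)), Real.sqrt_pos.2 (posRoot_pos (hpos q.1))⟩)
  left_inv := by
    rintro ⟨x, r, hr⟩
    ext
    · rfl
    · change √(posRoot (g + r ^ 2 - c x / r ^ 2 - g) (c x)) = r
      rw [show g + r ^ 2 - c x / r ^ 2 - g = r ^ 2 - c x / r ^ 2 by ring,
        posRoot_sub_div_self (hpos x).le (pow_pos hr 2), Real.sqrt_sq hr.le]
  right_inv := by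
    rintro ⟨x, z⟩
    have hR := posRoot_pos (t := z - g) (hpos x)
    ext
    · rfl
    · simp only [Real.sq_sqrt hR.le]
      linarith [posRoot_sub_div (t := z - g) (hpos x)]
  continuous_toFun := by
    have : ∀ p : X × Ioi (0 : ℝ), (p.2 : ℝ) ^ 2 ≠ 0 := fun p => pow_ne_zero 2 p.2.2.ne'
    fun_prop (disch := exact this)
  continuous_invFun := by
    refine continuous_fst.prodMk (Continuous.subtype_mk ?_ _)
    exact (continuous_posRoot.comp ((continuous_snd.sub continuous_const).prodMk
      (hc.comp continuous_fst))).sqrt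

section

variable {E F : Type*} [NormedAddCommGroup E] [NormedSpace ℝ E]
  [NormedAddCommGroup F] [NormedSpace ℝ F]

def saddleHomeomorphSphereBallIoi :
    {p : E × F // p.1 ≠ 0 ∧ ‖p.1‖ * ‖p.2‖ ≤ 1} ≃ₜ
      {x : E // ‖x‖ = 1} × {y : F // ‖y‖ ≤ 1} × Ioi (0 : ℝ) where
  toFun p :=
    (⟨‖p.1.1‖⁻¹ • p.1.1, by
        rw [norm_smul, norm_inv, norm_norm, inv_mul_cancel₀ (norm_ne_zero_iff.2 p.2.1)]⟩,
     ⟨‖p.1.1‖ • p.1.2, by rw [norm_smul, norm_norm]; exact p.2.2⟩,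
     ⟨‖p.1.1‖, norm_pos_iff.2 p.2.1⟩)
  invFun q :=
    ⟨((q.2.2 : ℝ) • (q.1 : E), (q.2.2 : ℝ)⁻¹ • (q.2.1 : F)), by
      obtain ⟨⟨u, hu⟩, ⟨w, hw⟩, r, hr : 0 < r⟩ := q
      have hr' : r ≠ 0 := hr.ne'
      refine ⟨smul_ne_zero hr' (norm_ne_zero_iff.1 (by simp [hu])), ?_⟩
      simp only [norm_smul, Real.norm_eq_abs, abs_of_pos hr, abs_inv, hu]
      field_simp
      exact hw⟩
  left_inv := by
    rintro ⟨⟨x, y⟩, hx, -⟩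
    have hx' : ‖x‖ ≠ 0 := norm_ne_zero_iff.2 hx
    ext <;> simp [smul_smul, hx']
  right_inv := by
    rintro ⟨⟨u, hu⟩, ⟨w, hw⟩, r, hr : 0 < r⟩
    have hr' : r ≠ 0 := hr.ne'
    have hnorm : ‖r • u‖ = r := by rw [norm_smul, hu, Real.norm_of_nonneg hr.le, mul_one]
    ext <;> simp [hnorm, smul_smul, hr']
  continuous_toFun := by
    have : ∀ p : {p : E × F // p.1 ≠ 0 ∧ ‖p.1‖ * ‖p.2‖ ≤ 1}, ‖p.1.1‖ ≠ 0 :=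
      fun p => norm_ne_zero_iff.2 p.2.1
    fun_prop (disch := exact this)
  continuous_invFun := by
    have : ∀ q : {x : E // ‖x‖ = 1} × {y : F // ‖y‖ ≤ 1} × Ioi (0 : ℝ), (q.2.2 : ℝ) ≠ 0 :=
      fun q => q.2.2.2.ne'
    fun_prop (disch := exact this)

end

-- The paper's `c(x, y)`, as a function of `s = ‖x‖‖y‖`.
def saddleCoeff (τ : ℝ → ℝ) (s : ℝ) : ℝ := s ^ 2 * τ s + (1 - τ s)

lemma saddleCoeff_pos {τ : ℝ → ℝ} {s : ℝ} (hs : s ∈ Icc 0 1) (hτs : τ s ≤ 1) (hτ0 : τ 0 = 0) :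
    0 < saddleCoeff τ s := by
  rcases hs.1.eq_or_lt with rfl | hs0
  · simp [saddleCoeff, hτ0]
  · have h : τ s * (1 - s ^ 2) ≤ 1 - s ^ 2 :=
      mul_le_of_le_one_left (by nlinarith [hs.2]) hτs
    unfold saddleCoeff
    nlinarith

theorem saddle_minus_homeomorph_general (a b : ℕ) (g : ℝ)
    (τ : ℝ → ℝ) (hτc : Continuous τ)
    (hτ01 : ∀ t ∈ Set.Icc (0 : ℝ) 1, τ t ∈ Set.Icc (0 : ℝ) 1) (hτ0 : τ 0 = 0) :
    ∃ h : {p : EuclideanSpace ℝ (Fin a) × EuclideanSpace ℝ (Fin b) //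
          p.1 ≠ 0 ∧ ‖p.1‖ * ‖p.2‖ ≤ 1} ≃ₜ
        {x : EuclideanSpace ℝ (Fin a) // ‖x‖ = 1} ×
          {y : EuclideanSpace ℝ (Fin b) // ‖y‖ ≤ 1} × ℝ,
      ∀ p : {p : EuclideanSpace ℝ (Fin a) × EuclideanSpace ℝ (Fin b) //
          p.1 ≠ 0 ∧ ‖p.1‖ * ‖p.2‖ ≤ 1},
        ((h p).1 : EuclideanSpace ℝ (Fin a)) = ‖p.1.1‖⁻¹ • p.1.1 ∧
        ((h p).2.1 : EuclideanSpace ℝ (Fin b)) = ‖p.1.1‖ • p.1.2 ∧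
        (h p).2.2 = g + ‖p.1.1‖ ^ 2 -
          (‖p.1.1‖ ^ 2 * ‖p.1.2‖ ^ 2 * τ (‖p.1.1‖ * ‖p.1.2‖) +
            (1 - τ (‖p.1.1‖ * ‖p.1.2‖))) / ‖p.1.1‖ ^ 2 := by
  set c : {y : EuclideanSpace ℝ (Fin b) // ‖y‖ ≤ 1} → ℝ := fun w => saddleCoeff τ ‖w.1‖
  have hc_cont : Continuous c := by unfold c saddleCoeff; fun_prop
  have hc_pos : ∀ w, 0 < c w := fun w =>
    have hw : ‖(w : EuclideanSpace ℝ (Fin b))‖ ∈ Icc 0 1 := ⟨norm_nonneg _, w.2⟩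
    saddleCoeff_pos hw (hτ01 _ hw).2 hτ0
  refine ⟨saddleHomeomorphSphereBallIoi.trans
    ((Homeomorph.refl _).prodCongr (.prodIoiSqSubDiv c hc_cont hc_pos g)),
    fun p => ⟨rfl, rfl, ?_⟩⟩
  change g + ‖p.1.1‖ ^ 2 - saddleCoeff τ ‖‖p.1.1‖ • p.1.2‖ / ‖p.1.1‖ ^ 2 = _
  rw [norm_smul, norm_norm, saddleCoeff, mul_pow]

/-- The map `Φ₋(x,y) = (x/‖x‖, ‖x‖·y, f₋(x,y))` is a homeomorphism from the saddle region
`Sad₋ = {(x,y) : x ≠ 0, ‖x‖‖y‖ ≤ 1}` onto `S^{a-1} × D̄^b × ℝ`, where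
`f₋(x,y) = g + ‖x‖² - c(x,y)/‖x‖²` and
`c(x,y) = ‖x‖²‖y‖²·τ(‖x‖‖y‖) + (1 - τ(‖x‖‖y‖))`. -/
theorem saddle_minus_homeomorph (a b : ℕ) (ha : 1 ≤ a) (hb : 1 ≤ b) (g : ℝ)
    (τ : ℝ → ℝ) (hτc : Continuous τ)
    (hτ01 : ∀ t ∈ Set.Icc (0 : ℝ) 1, τ t ∈ Set.Icc (0 : ℝ) 1) (hτ0 : τ 0 = 0) :
    ∃ h : {p : EuclideanSpace ℝ (Fin a) × EuclideanSpace ℝ (Fin b) //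
          p.1 ≠ 0 ∧ ‖p.1‖ * ‖p.2‖ ≤ 1} ≃ₜ
        {x : EuclideanSpace ℝ (Fin a) // ‖x‖ = 1} ×
          {y : EuclideanSpace ℝ (Fin b) // ‖y‖ ≤ 1} × ℝ,
      ∀ p : {p : EuclideanSpace ℝ (Fin a) × EuclideanSpace ℝ (Fin b) //
          p.1 ≠ 0 ∧ ‖p.1‖ * ‖p.2‖ ≤ 1},
        ((h p).1 : EuclideanSpace ℝ (Fin a)) = ‖p.1.1‖⁻¹ • p.1.1 ∧
        ((h p).2.1 : EuclideanSpace ℝ (Fin b)) = ‖p.1.1‖ • p.1.2 ∧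
        (h p).2.2 = g + ‖p.1.1‖ ^ 2 -
          (‖p.1.1‖ ^ 2 * ‖p.1.2‖ ^ 2 * τ (‖p.1.1‖ * ‖p.1.2‖) +
            (1 - τ (‖p.1.1‖ * ‖p.1.2‖))) / ‖p.1.1‖ ^ 2 :=
  saddle_minus_homeomorph_general a b g τ hτc hτ01 hτ0
end
end

section
/- The map (x,y) ↦ (‖y‖·x, y/‖y‖) restricts to a homeomorphism from the zero set M₊ = {(x,y) ∈ Sad₊ : f₊(x,y) = 0} onto the product D̄^a × S^{b−1} of the closed unit ball in ℝ^a with the unit sphere in ℝ^b. -/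
/-!
Write `r = ‖y‖` and `u = ‖x‖‖y‖ = ‖‖y‖ • x‖`. On `Sad₊` the equation `f₊ = 0` reads
`r⁴ - g r² - c(u) = 0`, and `c(u) = u² τ(u) + (1 - τ(u))` is a convex combination of `u²` and `1`
that is positive on `[0, 1]` because `τ 0 = 0`. A quadratic in `r²` with negative constant term has
exactly one positive root, so `M₊` is the graph `‖y‖ = ρ(‖‖y‖ • x‖)` of a continuous positive
function `ρ`, and `(v, w) ↦ (ρ(‖v‖)⁻¹ • v, ρ(‖v‖) • w)` inverts the rescaling map.
-/

open Real

/-- The unique positive `r` with `r ^ 4 - g * r ^ 2 - c = 0`, for `0 < c`. -/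
noncomputable def quarticPosRoot (g c : ℝ) : ℝ := √((g + √(g ^ 2 + 4 * c)) / 2)

lemma neg_lt_sqrt_sq_add (g : ℝ) {c : ℝ} (hc : 0 < c) : -g < √(g ^ 2 + 4 * c) :=
  calc -g ≤ |g| := neg_le_abs g
    _ = √(g ^ 2) := (sqrt_sq_eq_abs g).symm
    _ < √(g ^ 2 + 4 * c) := sqrt_lt_sqrt (sq_nonneg g) (by linarith)

lemma quarticPosRoot_pos (g : ℝ) {c : ℝ} (hc : 0 < c) : 0 < quarticPosRoot g c :=
  sqrt_pos.mpr (by linarith [neg_lt_sqrt_sq_add g hc])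

lemma quarticPosRoot_sq (g : ℝ) {c : ℝ} (hc : 0 < c) :
    quarticPosRoot g c ^ 2 = (g + √(g ^ 2 + 4 * c)) / 2 :=
  sq_sqrt (by linarith [neg_lt_sqrt_sq_add g hc])

lemma continuous_quarticPosRoot (g : ℝ) : Continuous (quarticPosRoot g) := by
  unfold quarticPosRoot
  fun_prop

lemma add_div_sq_sub_sq_eq_zero_iff {g c r : ℝ} (hc : 0 < c) (hr : 0 < r) :
    g + c / r ^ 2 - r ^ 2 = 0 ↔ r = quarticPosRoot g c := by
  have hR := quarticPosRoot_sq g hc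
  have hRpos := quarticPosRoot_pos g hc
  generalize quarticPosRoot g c = R at hR hRpos ⊢
  have hD : √(g ^ 2 + 4 * c) ^ 2 = g ^ 2 + 4 * c := sq_sqrt (by positivity)
  -- the other root `g - R ^ 2` of `s ^ 2 - g * s - c` is negative
  have hother : 0 < r ^ 2 + R ^ 2 - g := by
    nlinarith [neg_lt_sqrt_sq_add g hc, sqrt_nonneg (g ^ 2 + 4 * c)]
  have hfactor : (g + c / r ^ 2 - r ^ 2) * r ^ 2 = -((r ^ 2 - R ^ 2) * (r ^ 2 + R ^ 2 - g)) := by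
    rw [sub_mul, add_mul, div_mul_cancel₀ _ (pow_pos hr 2).ne', hR]
    linear_combination -hD / 4
  rw [← mul_eq_zero_iff_right (pow_pos hr 2).ne', hfactor, neg_eq_zero,
    mul_eq_zero_iff_right hother.ne', sub_eq_zero,
    pow_left_inj₀ hr.le hRpos.le two_ne_zero]

lemma sq_mul_add_one_sub_pos_s9 {u t : ℝ} (ht0 : 0 ≤ t) (ht1 : t ≤ 1) (h : u ≠ 0 ∨ t ≠ 1) :
    0 < u ^ 2 * t + (1 - t) := by
  rcases h with hu | ht
  · have : 0 < u ^ 2 := by positivity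
    rcases le_total (u ^ 2) 1 with h1 | h1
    · nlinarith [mul_nonneg (sub_nonneg.2 ht1) (sub_nonneg.2 h1)]
    · nlinarith [mul_nonneg ht0 (sub_nonneg.2 h1)]
  · nlinarith [sq_nonneg u, ht1.lt_of_ne ht]

section RescaleGraph

variable {E F : Type*} [NormedAddCommGroup E] [NormedSpace ℝ E]
  [NormedAddCommGroup F] [NormedSpace ℝ F] {ρ : ℝ → ℝ}

omit [NormedSpace ℝ F] in
lemma norm_norm_smul (x : E) (y : F) : ‖‖y‖ • x‖ = ‖x‖ * ‖y‖ := by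
  rw [norm_smul, norm_norm, mul_comm]

lemma norm_inv_smul_mul_norm_smul {r : ℝ} (hr : 0 < r) (v : E) {w : F} (hw : ‖w‖ = 1) :
    ‖r⁻¹ • v‖ * ‖r • w‖ = ‖v‖ := by
  rw [norm_smul_of_nonneg (inv_nonneg.2 hr.le), norm_smul_of_nonneg hr.le, hw]
  field_simp

noncomputable def rescaleGraphHomeomorph (hρ : Continuous ρ)
    (hρpos : ∀ u, 0 ≤ u → u ≤ 1 → 0 < ρ u) :
    {p : E × F // (p.2 ≠ 0 ∧ ‖p.1‖ * ‖p.2‖ ≤ 1) ∧ ‖p.2‖ = ρ (‖p.1‖ * ‖p.2‖)} ≃ₜ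
      {x : E // ‖x‖ ≤ 1} × {y : F // ‖y‖ = 1} where
  toFun p := (⟨‖p.1.2‖ • p.1.1, by rw [norm_norm_smul]; exact p.2.1.2⟩,
    ⟨‖p.1.2‖⁻¹ • p.1.2, norm_smul_inv_norm p.2.1.1⟩)
  invFun q := ⟨((ρ ‖q.1.1‖)⁻¹ • q.1.1, ρ ‖q.1.1‖ • q.2.1), by
    obtain ⟨⟨v, hv⟩, ⟨w, hw⟩⟩ := q
    have hρv := hρpos ‖v‖ (norm_nonneg v) hv
    refine ⟨⟨smul_ne_zero hρv.ne' (ne_zero_of_norm_ne_zero (by rw [hw]; exact one_ne_zero)), ?_⟩, ?_⟩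
    · rw [norm_inv_smul_mul_norm_smul hρv v hw]; exact hv
    · rw [norm_inv_smul_mul_norm_smul hρv v hw, norm_smul_of_nonneg hρv.le, hw, mul_one]⟩
  left_inv := by
    rintro ⟨⟨x, y⟩, ⟨hy, -⟩, hgraph⟩
    have hy' : 0 < ‖y‖ := norm_pos_iff.mpr hy
    ext1
    simp only [norm_norm_smul, ← hgraph, smul_smul, inv_mul_cancel₀ hy'.ne',
      mul_inv_cancel₀ hy'.ne', one_smul]
  right_inv := by
    rintro ⟨⟨v, hv⟩, ⟨w, hw⟩⟩
    have hρv := hρpos ‖v‖ (norm_nonneg v) hv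
    ext1 <;> ext1 <;>
      simp only [norm_smul_of_nonneg hρv.le, hw, mul_one, smul_smul, mul_inv_cancel₀ hρv.ne',
        inv_mul_cancel₀ hρv.ne', one_smul]
  continuous_toFun := by
    fun_prop (disch := exact fun p => norm_ne_zero_iff.mpr p.2.1.1)
  continuous_invFun := by
    fun_prop (disch := exact fun q => (hρpos ‖q.1.1‖ (norm_nonneg _) q.1.2).ne')

end RescaleGraph

theorem saddle_zero_set_homeomorph_general (a b : ℕ) (g : ℝ)
    (τ : ℝ → ℝ) (hτc : Continuous τ)
    (hτ01 : ∀ t ∈ Set.Icc (0 : ℝ) 1, τ t ∈ Set.Icc (0 : ℝ) 1) (hτ0 : τ 0 = 0) :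
    ∃ h : {p : EuclideanSpace ℝ (Fin a) × EuclideanSpace ℝ (Fin b) //
          (p.2 ≠ 0 ∧ ‖p.1‖ * ‖p.2‖ ≤ 1) ∧
          g + (‖p.1‖ ^ 2 * ‖p.2‖ ^ 2 * τ (‖p.1‖ * ‖p.2‖) +
            (1 - τ (‖p.1‖ * ‖p.2‖))) / ‖p.2‖ ^ 2 - ‖p.2‖ ^ 2 = 0} ≃ₜ
        {x : EuclideanSpace ℝ (Fin a) // ‖x‖ ≤ 1} ×
          {y : EuclideanSpace ℝ (Fin b) // ‖y‖ = 1},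
      ∀ p : {p : EuclideanSpace ℝ (Fin a) × EuclideanSpace ℝ (Fin b) //
          (p.2 ≠ 0 ∧ ‖p.1‖ * ‖p.2‖ ≤ 1) ∧
          g + (‖p.1‖ ^ 2 * ‖p.2‖ ^ 2 * τ (‖p.1‖ * ‖p.2‖) +
            (1 - τ (‖p.1‖ * ‖p.2‖))) / ‖p.2‖ ^ 2 - ‖p.2‖ ^ 2 = 0},
        ((h p).1 : EuclideanSpace ℝ (Fin a)) = ‖p.1.2‖ • p.1.1 ∧
        ((h p).2 : EuclideanSpace ℝ (Fin b)) = ‖p.1.2‖⁻¹ • p.1.2 := by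
  set c : ℝ → ℝ := fun u => u ^ 2 * τ u + (1 - τ u)
  have hc : ∀ u, 0 ≤ u → u ≤ 1 → 0 < c u := fun u hu0 hu1 => by
    obtain ⟨ht0, ht1⟩ := hτ01 u ⟨hu0, hu1⟩
    refine sq_mul_add_one_sub_pos_s9 ht0 ht1 ?_
    rcases eq_or_ne u 0 with rfl | hu
    · exact Or.inr (by rw [hτ0]; exact zero_ne_one)
    · exact Or.inl hu
  set ρ : ℝ → ℝ := fun u => quarticPosRoot g (c u)
  have hzero_iff : ∀ p : EuclideanSpace ℝ (Fin a) × EuclideanSpace ℝ (Fin b),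
      p.2 ≠ 0 ∧ ‖p.1‖ * ‖p.2‖ ≤ 1 →
      (g + (‖p.1‖ ^ 2 * ‖p.2‖ ^ 2 * τ (‖p.1‖ * ‖p.2‖) + (1 - τ (‖p.1‖ * ‖p.2‖))) / ‖p.2‖ ^ 2
        - ‖p.2‖ ^ 2 = 0 ↔ ‖p.2‖ = ρ (‖p.1‖ * ‖p.2‖)) := by
    rintro ⟨x, y⟩ ⟨hy, hle⟩
    rw [← mul_pow]
    exact add_div_sq_sub_sq_eq_zero_iff (hc _ (by positivity) hle) (norm_pos_iff.mpr hy)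
  refine ⟨(Homeomorph.subtype (.refl _) (fun p => and_congr_right (hzero_iff p))
    (q := fun p => (p.2 ≠ 0 ∧ ‖p.1‖ * ‖p.2‖ ≤ 1) ∧ ‖p.2‖ = ρ (‖p.1‖ * ‖p.2‖))).trans
    (rescaleGraphHomeomorph ((continuous_quarticPosRoot g).comp (by fun_prop))
      fun u hu0 hu1 => quarticPosRoot_pos g (hc u hu0 hu1)), fun p => ⟨rfl, rfl⟩⟩

/-- The map `(x,y) ↦ (‖y‖·x, y/‖y‖)` restricts to a homeomorphism from the zero set
`M₊ = {(x,y) ∈ Sad₊ : f₊(x,y) = 0}` onto `D̄^a × S^{b-1}`, where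
`Sad₊ = {(x,y) : y ≠ 0, ‖x‖‖y‖ ≤ 1}`, `f₊(x,y) = g + c(x,y)/‖y‖² - ‖y‖²` and
`c(x,y) = ‖x‖²‖y‖²·τ(‖x‖‖y‖) + (1 - τ(‖x‖‖y‖))`. -/
theorem saddle_zero_set_homeomorph (a b : ℕ) (ha : 1 ≤ a) (hb : 1 ≤ b) (g : ℝ)
    (τ : ℝ → ℝ) (hτc : Continuous τ)
    (hτ01 : ∀ t ∈ Set.Icc (0 : ℝ) 1, τ t ∈ Set.Icc (0 : ℝ) 1) (hτ0 : τ 0 = 0) :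
    ∃ h : {p : EuclideanSpace ℝ (Fin a) × EuclideanSpace ℝ (Fin b) //
          (p.2 ≠ 0 ∧ ‖p.1‖ * ‖p.2‖ ≤ 1) ∧
          g + (‖p.1‖ ^ 2 * ‖p.2‖ ^ 2 * τ (‖p.1‖ * ‖p.2‖) +
            (1 - τ (‖p.1‖ * ‖p.2‖))) / ‖p.2‖ ^ 2 - ‖p.2‖ ^ 2 = 0} ≃ₜ
        {x : EuclideanSpace ℝ (Fin a) // ‖x‖ ≤ 1} ×
          {y : EuclideanSpace ℝ (Fin b) // ‖y‖ = 1},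
      ∀ p : {p : EuclideanSpace ℝ (Fin a) × EuclideanSpace ℝ (Fin b) //
          (p.2 ≠ 0 ∧ ‖p.1‖ * ‖p.2‖ ≤ 1) ∧
          g + (‖p.1‖ ^ 2 * ‖p.2‖ ^ 2 * τ (‖p.1‖ * ‖p.2‖) +
            (1 - τ (‖p.1‖ * ‖p.2‖))) / ‖p.2‖ ^ 2 - ‖p.2‖ ^ 2 = 0},
        ((h p).1 : EuclideanSpace ℝ (Fin a)) = ‖p.1.2‖ • p.1.1 ∧
        ((h p).2 : EuclideanSpace ℝ (Fin b)) = ‖p.1.2‖⁻¹ • p.1.2 :=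
  saddle_zero_set_homeomorph_general a b g τ hτc hτ01 hτ0
end
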